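/- Let k ≥ 3, let H = (V,E) be a k-graph on n vertices having Property 𝓔, let h be an orientation of its edges, let v ∈ V, and set s_i := N_{h,i}(v). Set t_ε := ⌊(1−ε)·log_{k−1} n⌋ and assume that all vertices within h-distance at most t_ε from v are occupied. Then there exists a constant d_k > 0 such that whenever ε > 0 is sufficiently small and n is sufficiently large, s_{t_ε} ≥ n^{1−ε}·e^{−d_k/ε}. -/

import Mathlib

open Filter Real

attribute [local instance] Classical.propDecidable

/-- `x_s = log_k((k-1)e^k) / (log_k(n/s) - 1)`. -/
noncomputable def xval (k n : ℕ) (s : ℝ) : ℝ :=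
  Real.logb k (((k : ℝ) - 1) * Real.exp k) / (Real.logb k ((n : ℝ) / s) - 1)

/-- Property `𝓔` for a `k`-graph with vertex type `V` and edges indexed by `ι`. -/
def PropE {V ι : Type} [Fintype V] [DecidableEq V] [Fintype ι]
    (k : ℕ) (edges : ι → Multiset V) : Prop :=
  (∀ E' : Finset ι,
    Real.log (Real.log (Fintype.card V)) < (E'.card : ℝ) →
    (E'.card : ℝ) < (Fintype.card V : ℝ) / k →
      ((k : ℝ) - 1 - xval k (Fintype.card V) E'.card) * E'.card
        ≤ (((E'.biUnion fun i => (edges i).toFinset).card : ℕ) : ℝ)) ∧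
  (∀ E' : Finset ι, (E'.card : ℝ) ≤ Real.log (Real.log (Fintype.card V)) →
      ((k : ℝ) - 1) * E'.card
        ≤ (((E'.biUnion fun i => (edges i).toFinset).card : ℕ) : ℝ))

/-- `nset edges h v t`: vertices within `h`-distance at most `t` from `v`,
so `N_{h,t}(v) = (nset edges h v t).card`. -/
noncomputable def nset {V ι : Type} [Fintype V] [DecidableEq V] [Fintype ι]
    (edges : ι → Multiset V) (h : ι → V) (v : V) : ℕ → Finset V
  | 0 => {v}
  | t + 1 =>
    nset edges h v t ∪
      Finset.univ.filter (fun w : V => ∃ i : ι, h i ∈ nset edges h v t ∧ w ∈ edges i)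

/-!
While the ball `nset t` has at most `n^(1-ε/2)` vertices, all of them are occupied, so exactly
`#(nset t)` edges are oriented into it and their vertices lie in `nset (t+1)`; Property `𝓔`
makes the ball grow by the factor `k - 1 - x` with `x = O(1/(ε log n))`. After
`T = ⌊(1-ε) log_{k-1} n⌋` steps this gives `(k-1)^T (1 - x/(k-1))^T`, where
`(k-1)^T ≥ n^(1-ε)/(k-1) ≥ n^(1-ε) e^(-1/ε)` and `(1 - x/(k-1))^T ≥ e^(-O(1/ε))` because
`xT = O(1/ε)`. If the ball ever exceeds `n^(1-ε/2)`, the bound is immediate.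
-/
open Finset

lemma Real.exp_neg_two_mul_le_one_sub {y : ℝ} (hy₀ : 0 ≤ y) (hy : y ≤ 1 / 2) :
    exp (-(2 * y)) ≤ 1 - y := by
  have hinv : 1 ≤ (1 - y) * (1 + 2 * y) := by nlinarith
  have hexp : 1 + 2 * y ≤ exp (2 * y) := by linarith [add_one_le_exp (2 * y)]
  rw [exp_neg, inv_le_iff_one_le_mul₀ (exp_pos _)]
  calc 1 ≤ (1 - y) * (1 + 2 * y) := hinv
    _ ≤ (1 - y) * exp (2 * y) := mul_le_mul_of_nonneg_left hexp (by linarith)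

lemma Real.rpow_sub_one_le_pow_floor {b : ℝ} (hb : 1 ≤ b) (u : ℝ) :
    b ^ (u - 1) ≤ b ^ ⌊u⌋₊ := by
  rw [← rpow_natCast]
  exact rpow_le_rpow_of_exponent_le hb (Nat.sub_one_lt_floor u).le

lemma pow_le_of_forall_mul_le_succ {R : Type*} [Semiring R] [PartialOrder R] [IsOrderedRing R]
    {f : ℕ → R} {c : R} (hc : 0 ≤ c) (h₀ : 1 ≤ f 0) :
    ∀ {T : ℕ}, (∀ t < T, c * f t ≤ f (t + 1)) → c ^ T ≤ f T
  | 0, _ => by simpa using h₀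
  | T + 1, hf => calc
      c ^ (T + 1) = c * c ^ T := pow_succ' c T
      _ ≤ c * f T := mul_le_mul_of_nonneg_left
        (pow_le_of_forall_mul_le_succ hc h₀ fun t ht => hf t (ht.trans T.lt_succ_self)) hc
      _ ≤ f (T + 1) := hf T T.lt_succ_self

lemma card_filter_apply_mem_eq {V ι : Type} [DecidableEq V] [Fintype ι] {h : ι → V}
    (hinj : Function.Injective h) {S : Finset V}
    (hS : ∀ w ∈ S, ∃ i, h i = w) : #(univ.filter fun i => h i ∈ S) = #S := by
  have himage : (univ.filter fun i => h i ∈ S).image h = S := by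
    ext w
    simp only [mem_image, mem_filter, mem_univ, true_and]
    exact ⟨fun ⟨i, hi, hiw⟩ => hiw ▸ hi, fun hw => (hS w hw).imp fun i hi => ⟨by rwa [hi], hi⟩⟩
  calc #(univ.filter fun i => h i ∈ S) = #((univ.filter fun i => h i ∈ S).image h) :=
        (card_image_of_injective _ hinj).symm
    _ = #S := by rw [himage]

section Orientation

variable {V ι : Type} [Fintype V] [DecidableEq V] [Fintype ι] {edges : ι → Multiset V} {h : ι → V}

lemma nset_mono (v : V) : Monotone (nset edges h v) :=
  monotone_nat_of_le_succ fun _ => Finset.subset_union_left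

lemma card_nset_zero (v : V) : #(nset edges h v 0) = 1 := card_singleton v

lemma biUnion_edges_subset_nset_succ (v : V) (t : ℕ) :
    ((univ.filter fun i => h i ∈ nset edges h v t).biUnion fun i => (edges i).toFinset)
      ⊆ nset edges h v (t + 1) := by
  intro w hw
  obtain ⟨i, hi, hwi⟩ := mem_biUnion.1 hw
  exact mem_union_right _ (mem_filter.2
    ⟨mem_univ w, i, (mem_filter.1 hi).2, Multiset.mem_toFinset.1 hwi⟩)

lemma PropE.mul_card_le_card_biUnion {k : ℕ} (hE : PropE k edges) (hinj : Function.Injective h)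
    {S : Finset V} (hS : ∀ w ∈ S, ∃ i, h i = w) {x : ℝ} (hx : 0 ≤ x)
    (hlarge : log (log (Fintype.card V)) < #S →
      (#S : ℝ) < Fintype.card V / k ∧ xval k (Fintype.card V) #S ≤ x) :
    ((k : ℝ) - 1 - x) * #S
      ≤ #((univ.filter fun i => h i ∈ S).biUnion fun i => (edges i).toFinset) := by
  have hcard := card_filter_apply_mem_eq hinj hS
  by_cases hS_large : log (log (Fintype.card V)) < #S
  · obtain ⟨hlt, hxval⟩ := hlarge hS_large
    calc ((k : ℝ) - 1 - x) * #S ≤ ((k : ℝ) - 1 - xval k (Fintype.card V) #S) * #S := by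
          gcongr
      _ ≤ _ := by
          have := hE.1 _ (by rwa [hcard]) (by rwa [hcard])
          rwa [hcard] at this
  · calc ((k : ℝ) - 1 - x) * #S ≤ ((k : ℝ) - 1) * #S :=
          mul_le_mul_of_nonneg_right (by linarith) (Nat.cast_nonneg _)
      _ ≤ _ := by
          have := hE.2 _ (by rw [hcard]; exact le_of_not_gt hS_large)
          rwa [hcard] at this

lemma PropE.pow_le_card_nset {k : ℕ} (hE : PropE k edges) (hinj : Function.Injective h)
    {v : V} {T : ℕ} (hocc : ∀ w ∈ nset edges h v T, ∃ i, h i = w) {x : ℝ} (hx₀ : 0 ≤ x)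
    (hx : x ≤ k - 1)
    (hlarge : ∀ t < T, log (log (Fintype.card V)) < #(nset edges h v t) →
      (#(nset edges h v t) : ℝ) < Fintype.card V / k ∧
        xval k (Fintype.card V) #(nset edges h v t) ≤ x) :
    ((k : ℝ) - 1 - x) ^ T ≤ #(nset edges h v T) := by
  refine pow_le_of_forall_mul_le_succ (f := fun t => (#(nset edges h v t) : ℝ))
    (by linarith) (by simp [card_nset_zero]) fun t ht => ?_
  calc ((k : ℝ) - 1 - x) * #(nset edges h v t)
      ≤ #((univ.filter fun i => h i ∈ nset edges h v t).biUnion fun i => (edges i).toFinset) :=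
        hE.mul_card_le_card_biUnion hinj (fun w hw => hocc w (nset_mono v ht.le hw)) hx₀
          (hlarge t ht)
    _ ≤ #(nset edges h v (t + 1)) := by
        exact_mod_cast card_le_card (biUnion_edges_subset_nset_succ v t)

end Orientation

lemma Real.rpow_one_sub_half_lt_div {N b ε : ℝ} (hN : 0 < N) (hb : 0 < b)
    (h : 2 * log b < ε * log N) : N ^ (1 - ε / 2) < N / b := by
  have hb_lt : b < N ^ (ε / 2) := by
    rw [← exp_log hb, rpow_def_of_pos hN, exp_lt_exp]
    linarith
  rw [rpow_sub hN, rpow_one]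
  exact div_lt_div_of_pos_left hN hb hb_lt

lemma lt_div_and_xval_le_of_le_rpow {k n : ℕ} (hk : 2 ≤ k) {s ε : ℝ} (hs : 0 < s)
    (hsn : s ≤ (n : ℝ) ^ (1 - ε / 2)) (h : 4 * log k ≤ ε * log n) :
    s < n / k ∧ xval k n s ≤ 4 * logb k ((k - 1) * exp k) * log k / (ε * log n) := by
  have hk2 : (2 : ℝ) ≤ k := by exact_mod_cast hk
  have hk1 : (1 : ℝ) < k := by linarith
  have hlogk : 0 < log k := log_pos hk1
  have hεn : 0 < ε * log n := by linarith
  have hn : (0 : ℝ) < n := by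
    rcases Nat.eq_zero_or_pos n with rfl | hn
    · simp at hεn
    · exact_mod_cast hn
  refine ⟨hsn.trans_lt (rpow_one_sub_half_lt_div hn (by linarith) (by linarith)), ?_⟩
  have hL : 0 ≤ logb k ((k - 1) * exp k) :=
    logb_nonneg hk1 (one_le_mul_of_one_le_of_one_le (by linarith) (one_le_exp (by positivity)))
  have hlogs : log s ≤ (1 - ε / 2) * log n := by
    simpa only [log_rpow hn] using log_le_log hs hsn
  have hD : ε * log n / (4 * log k) ≤ logb k (n / s) - 1 := by
    have hmul : (ε * log n / (4 * log k) + 1) * log k = ε * log n / 4 + log k := by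
      field_simp
    rw [le_sub_iff_add_le, logb, log_div hn.ne' hs.ne', le_div_iff₀ hlogk, hmul]
    linarith
  calc xval k n s ≤ logb k ((k - 1) * exp k) / (ε * log n / (4 * log k)) :=
        div_le_div_of_nonneg_left hL (by positivity) hD
    _ = 4 * logb k ((k - 1) * exp k) * log k / (ε * log n) := by field_simp

lemma Real.rpow_mul_exp_le_sub_pow_floor_logb {a c ε N : ℝ} (ha : 1 < a) (hc : 0 ≤ c)
    (hε : 0 < ε) (haε : ε * log a ≤ 1) (hN : 1 < N) (hx : c / (ε * log N) ≤ a / 2) :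
    N ^ (1 - ε) * exp (-(2 * (c / (a * log a)) + 1) / ε)
      ≤ (a - c / (ε * log N)) ^ ⌊(1 - ε) * logb a N⌋₊ := by
  set T := ⌊(1 - ε) * logb a N⌋₊
  set y := c / (ε * log N) / a with hy_def
  have ha₀ : 0 < a := by linarith
  have hloga : 0 < log a := log_pos ha
  have hlogN : 0 < log N := log_pos hN
  have hy₀ : 0 ≤ y := by positivity
  have hy : y ≤ 1 / 2 := by rw [div_le_iff₀ ha₀]; linarith
  have hsub : a - c / (ε * log N) = a * (1 - y) := by rw [hy_def]; field_simp
  have hT : (T : ℝ) ≤ log N / log a := by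
    have hlogb : 0 ≤ logb a N := logb_nonneg ha hN.le
    calc (T : ℝ) ≤ ⌊logb a N⌋₊ := by exact_mod_cast Nat.floor_le_floor (by nlinarith)
      _ ≤ logb a N := Nat.floor_le hlogb
      _ = log N / log a := rfl
  have hyT : y * T ≤ c / (a * log a) / ε := by
    calc y * T ≤ y * (log N / log a) := by gcongr
      _ = c / (a * log a) / ε := by rw [hy_def]; field_simp
  have h_one_sub : exp (-(2 * (c / (a * log a))) / ε) ≤ (1 - y) ^ T := by
    calc exp (-(2 * (c / (a * log a))) / ε) ≤ exp (T * -(2 * y)) := by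
          have hB : -(2 * (c / (a * log a))) / ε = -2 * (c / (a * log a) / ε) := by ring
          rw [hB, exp_le_exp]; linarith [hyT]
      _ = exp (-(2 * y)) ^ T := by rw [exp_nat_mul]
      _ ≤ (1 - y) ^ T := by gcongr; exact exp_neg_two_mul_le_one_sub hy₀ hy
  have h_base : N ^ (1 - ε) * exp (-1 / ε) ≤ a ^ T := by
    have ha_exp : a ≤ exp (1 / ε) := by
      rw [← exp_log ha₀]; gcongr; rw [le_div_iff₀ hε]; linarith
    calc N ^ (1 - ε) * exp (-1 / ε) ≤ N ^ (1 - ε) / a := by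
          rw [neg_div, exp_neg, ← div_eq_mul_inv]; gcongr
      _ = a ^ ((1 - ε) * logb a N - 1) := by
          rw [rpow_sub ha₀, rpow_one, mul_comm, rpow_mul ha₀.le,
            rpow_logb ha₀ ha.ne' (by linarith)]
      _ ≤ a ^ T := rpow_sub_one_le_pow_floor ha.le _
  calc N ^ (1 - ε) * exp (-(2 * (c / (a * log a)) + 1) / ε)
      = N ^ (1 - ε) * exp (-1 / ε) * exp (-(2 * (c / (a * log a))) / ε) := by
        rw [mul_assoc, ← exp_add]; ring_nf
    _ ≤ a ^ T * (1 - y) ^ T := by gcongr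
    _ = (a - c / (ε * log N)) ^ T := by rw [hsub, mul_pow]

/-- for `k ≥ 3` there is `d_k > 0` such that for all sufficiently small
`ε > 0` and sufficiently large `n`: in any `k`-graph on `n` vertices with Property `𝓔`,
with any orientation `h` and vertex `v`, if all vertices within `h`-distance
`t_ε = ⌊(1-ε)log_{k-1} n⌋` of `v` are occupied, then `s_{t_ε} ≥ n^{1-ε}·e^{-d_k/ε}`. -/
theorem statement_8 (k : ℕ) (hk : 3 ≤ k) :
    ∃ d : ℝ, 0 < d ∧ ∃ ε₀ : ℝ, 0 < ε₀ ∧ ∀ ε : ℝ, 0 < ε → ε < ε₀ →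
      ∃ n₀ : ℕ, ∀ n : ℕ, n₀ ≤ n →
        ∀ (V ι : Type) [Fintype V] [DecidableEq V] [Fintype ι],
          Fintype.card V = n →
          ∀ (edges : ι → Multiset V), (∀ i, (edges i).card ≤ k) → PropE k edges →
          ∀ (h : ι → V), Function.Injective h → (∀ i, h i ∈ edges i) →
          ∀ v : V,
            (∀ w ∈ nset edges h v ⌊(1 - ε) * Real.logb ((k : ℝ) - 1) n⌋₊,
              ∃ i : ι, h i = w) →
            (n : ℝ) ^ (1 - ε) * Real.exp (-d / ε)
              ≤ ((nset edges h v ⌊(1 - ε) * Real.logb ((k : ℝ) - 1) n⌋₊).card : ℝ) := by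
  have hk₃ : (3 : ℝ) ≤ k := by exact_mod_cast hk
  have hlogk : 0 < log k := log_pos (by linarith)
  have hlogk₁ : 0 < log ((k : ℝ) - 1) := log_pos (by linarith)
  set L := logb k (((k : ℝ) - 1) * exp k)
  have hL : 0 ≤ L := logb_nonneg (by linarith)
    (one_le_mul_of_one_le_of_one_le (by linarith) (one_le_exp (by positivity)))
  set c := 4 * L * log k
  have hc : 0 ≤ c := mul_nonneg (mul_nonneg (by norm_num) hL) hlogk.le
  have hd : 0 ≤ c / (((k : ℝ) - 1) * log ((k : ℝ) - 1)) :=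
    div_nonneg hc (mul_nonneg (by linarith) hlogk₁.le)
  refine ⟨2 * (c / (((k : ℝ) - 1) * log ((k : ℝ) - 1))) + 1, by linarith, 1 / log ((k : ℝ) - 1),
    one_div_pos.2 hlogk₁, fun ε hε hεlt => ⟨⌈exp (8 * (L + 1) * log k / ε)⌉₊,
      fun n hn V ι _ _ _ hV edges _ hE h hinj _ v hocc => ?_⟩⟩
  -- `n₀` is chosen so that `ε log n ≥ 8 (L + 1) log k`: then `c / (ε log n) ≤ 1/2`, and balls
  -- of size at most `n^(1-ε/2)` stay below `n/k`
  have hn_exp : exp (8 * (L + 1) * log k / ε) ≤ n := (Nat.le_ceil _).trans (by exact_mod_cast hn)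
  have hN : 1 < (n : ℝ) := (one_lt_exp_iff.2 (div_pos (by nlinarith) hε)).trans_le hn_exp
  have hεn : 8 * (L + 1) * log k ≤ ε * log n := by
    rw [← div_le_iff₀' hε, ← exp_le_exp, exp_log (by linarith)]; exact hn_exp
  have hlogn : 0 < ε * log n := by nlinarith
  set T := ⌊(1 - ε) * logb ((k : ℝ) - 1) n⌋₊
  by_cases hbig : (n : ℝ) ^ (1 - ε / 2) < #(nset edges h v T)
  · calc (n : ℝ) ^ (1 - ε) * exp (-(2 * (c / (((k : ℝ) - 1) * log ((k : ℝ) - 1))) + 1) / ε)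
        ≤ (n : ℝ) ^ (1 - ε) :=
          mul_le_of_le_one_right (by positivity) (exp_le_one_iff.2 (by
            rw [neg_div, neg_nonpos]; exact div_nonneg (by linarith) hε.le))
      _ ≤ (n : ℝ) ^ (1 - ε / 2) := rpow_le_rpow_of_exponent_le hN.le (by linarith)
      _ ≤ _ := hbig.le
  rw [not_lt] at hbig
  have hx : c / (ε * log n) ≤ 1 / 2 := by
    rw [div_le_iff₀ hlogn]; nlinarith
  calc _ ≤ ((k : ℝ) - 1 - c / (ε * log n)) ^ T :=
        rpow_mul_exp_le_sub_pow_floor_logb (by linarith) hc hε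
          ((lt_div_iff₀ hlogk₁).1 hεlt).le hN (by linarith)
    _ ≤ _ := by
        subst hV
        refine hE.pow_le_card_nset hinj hocc (div_nonneg hc hlogn.le) (by linarith)
          fun t ht _ => ?_
        have hs : (#(nset edges h v t) : ℝ) ≤ (Fintype.card V : ℝ) ^ (1 - ε / 2) :=
          le_trans (by exact_mod_cast card_le_card (nset_mono v ht.le)) hbig
        have hs₀ : (0 : ℝ) < #(nset edges h v t) := by
          exact_mod_cast card_pos.2 ⟨v, nset_mono v (Nat.zero_le t) (mem_singleton_self v)⟩
        exact lt_div_and_xval_le_of_le_rpow (by omega) hs₀ hs (by nlinarith)
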